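/- Assume the closed linear span of {κ(λ) : λ ∈ Ω} equals H. Let A, B be bounded operators on H, each possessing a bounded inverse, and let T be the bounded operator on the Hilbert space direct sum H ⊕ H (with ‖(x,y)‖² = ‖x‖² + ‖y‖²) defined by T(x,y) = (A x, B y). Then T is unitary (T*∘T = T∘T* = I) if and only if max{ ber(A*∘A), ber(B*∘B) } ≤ 1 and max{ ber((A*∘A)^{−1}), ber((B*∘B)^{−1}) } ≤ 1. -/

import Mathlib

noncomputable section
open ContinuousLinearMap

variable {H : Type*} [NormedAddCommGroup H] [InnerProductSpace ℂ H] [CompleteSpace H]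
variable {Ω : Type*}

/-- Normalization `v̂ = v/‖v‖`. -/
def nvec {E : Type*} [NormedAddCommGroup E] [InnerProductSpace ℂ E] (v : E) : E := ‖v‖⁻¹ • v

/-- Berezin radius with normalized kernels: `ber(X) = sup_{λ} |⟨X κ̂(λ), κ̂(λ)⟩|`. -/
def berN {E Ω' : Type*} [NormedAddCommGroup E] [InnerProductSpace ℂ E] [CompleteSpace E]
    (κ : Ω' → E) (X : E →L[ℂ] E) : ℝ :=
  ⨆ l : Ω', ‖(inner ℂ (X (nvec (κ l))) (nvec (κ l)) : ℂ)‖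

/-- Berezin norm with normalized kernels: `‖X‖_ber = sup_{λ,μ} |⟨X κ̂(λ), κ̂(μ)⟩|`. -/
def berNormN {E Ω' : Type*} [NormedAddCommGroup E] [InnerProductSpace ℂ E] [CompleteSpace E]
    (κ : Ω' → E) (X : E →L[ℂ] E) : ℝ :=
  ⨆ q : Ω' × Ω', ‖(inner ℂ (X (nvec (κ q.1))) (nvec (κ q.2)) : ℂ)‖

/-- `N_{S,p}` with normalized kernels. -/
def NSN {E Ω' : Type*} [NormedAddCommGroup E] [InnerProductSpace ℂ E] [CompleteSpace E]
    (S : ℝ → ℝ → ℝ) (p : ℝ) (κ : Ω' → E) (T : E →L[ℂ] E) : ℝ :=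
  ⨆ q : Ω' × Ω', S (‖(inner ℂ (T (nvec (κ q.1))) (nvec (κ q.2)) : ℂ)‖ ^ p)
    (‖(inner ℂ ((adjoint T) (nvec (κ q.1))) (nvec (κ q.2)) : ℂ)‖ ^ p)

/-- The kernel family on the Hilbert direct sum `H ⊕ H`, indexed by `Ω × Ω`. -/
def prodKernel (κ : Ω → H) : Ω × Ω → WithLp 2 (H × H) :=
  fun q => (WithLp.equiv 2 (H × H)).symm (κ q.1, κ q.2)

/-- `|X| = (X*X)^{1/2}` via continuous functional calculus. -/
def absOp (X : H →L[ℂ] H) : H →L[ℂ] H := cfc Real.sqrt (adjoint X * X)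

/-- `h(|X|)^r` : continuous functional calculus of `|X|` applied to `s ↦ h(s)^r`. -/
def opApply (h : ℝ → ℝ) (r : ℝ) (X : H →L[ℂ] H) : H →L[ℂ] H :=
  cfc (fun s : ℝ => h s ^ r) (absOp X)

lemma nvec_of_norm_one {E : Type*} [NormedAddCommGroup E] [InnerProductSpace ℂ E]
    {v : E} (h : ‖v‖ = 1) : nvec v = v := by
  simp [nvec, h]

lemma berN_one_le [Nonempty Ω] (κ : Ω → H) (hκ : ∀ l, ‖κ l‖ = 1) :
    berN κ (1 : H →L[ℂ] H) ≤ 1 := by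
  refine Real.iSup_le (fun l => ?_) zero_le_one
  rw [nvec_of_norm_one (hκ l)]
  simp only [ContinuousLinearMap.one_apply, inner_self_eq_norm_sq_to_K, hκ l]
  norm_num

lemma le_berN (κ : Ω → H) (hκ : ∀ l, ‖κ l‖ = 1) (X : H →L[ℂ] H)
    (hb : berN κ X ≤ 1) (l : Ω) : ‖(inner ℂ (X (κ l)) (κ l) : ℂ)‖ ≤ 1 := by
  have bdd : BddAbove (Set.range fun l : Ω => ‖(inner ℂ (X (nvec (κ l))) (nvec (κ l)) : ℂ)‖) := by
    refine ⟨‖X‖, ?_⟩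
    rintro _ ⟨m, rfl⟩
    show ‖(inner ℂ (X (nvec (κ m))) (nvec (κ m)) : ℂ)‖ ≤ ‖X‖
    rw [nvec_of_norm_one (hκ m)]
    calc ‖(inner ℂ (X (κ m)) (κ m) : ℂ)‖ ≤ ‖X (κ m)‖ * ‖κ m‖ := norm_inner_le_norm _ _
      _ ≤ ‖X‖ * ‖κ m‖ * ‖κ m‖ := by
          have := X.le_opNorm (κ m)
          nlinarith [norm_nonneg (κ m), norm_nonneg (X (κ m))]
      _ = ‖X‖ := by rw [hκ m]; ring
  have h := le_ciSup bdd l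
  rw [nvec_of_norm_one (hκ l)] at h
  exact h.trans hb

/-- The key per-vector lemma for the backward direction. -/
lemma key_vec (A : H →L[ℂ] H) (hA : IsUnit A) (v : H) (hv : ‖v‖ = 1)
    (h1 : ‖(inner ℂ ((adjoint A * A) v) v : ℂ)‖ ≤ 1)
    (h2 : ‖(inner ℂ ((Ring.inverse (adjoint A * A)) v) v : ℂ)‖ ≤ 1) :
    (adjoint A * A) v = v := by
  set B := Ring.inverse A with hBdef
  have hAB : A * B = 1 := Ring.mul_inverse_cancel A hA
  have hBA : B * A = 1 := Ring.inverse_mul_cancel A hA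
  have hPQ : (star A * A) * (B * star B) = 1 := by
    rw [mul_assoc, ← mul_assoc A B, hAB, one_mul, ← star_mul, hBA, star_one]
  have hQP : (B * star B) * (star A * A) = 1 := by
    rw [mul_assoc, ← mul_assoc (star B), ← star_mul, hAB, star_one, one_mul, hBA]
  have hQ : Ring.inverse (adjoint A * A) = B * star B := by
    rw [← star_eq_adjoint]
    exact Ring.inverse_unit ⟨star A * A, B * star B, hPQ, hQP⟩
  -- the two vectors
  set x := A v with hxdef
  set y := adjoint B v with hydef
  have hxy : (inner ℂ x y : ℂ) = 1 := by
    rw [hxdef, hydef, adjoint_inner_right, ← ContinuousLinearMap.mul_apply, hBA,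
      ContinuousLinearMap.one_apply, inner_self_eq_norm_sq_to_K, hv]
    norm_num
  have hx2 : ‖x‖ ^ 2 ≤ 1 := by
    have : (inner ℂ x x : ℂ) = inner ℂ ((adjoint A * A) v) v := by
      rw [ContinuousLinearMap.mul_apply, adjoint_inner_left]
    have hn : ‖(inner ℂ x x : ℂ)‖ = ‖x‖ ^ 2 := by
      rw [inner_self_eq_norm_sq_to_K]
      simp
    rw [← hn]; rw [this]; exact h1
  have hy2 : ‖y‖ ^ 2 ≤ 1 := by
    have : (inner ℂ y y : ℂ) = inner ℂ v ((Ring.inverse (adjoint A * A)) v) := by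
      rw [hydef, adjoint_inner_left, hQ, ContinuousLinearMap.mul_apply, ← star_eq_adjoint]
    have hn : ‖(inner ℂ y y : ℂ)‖ = ‖y‖ ^ 2 := by
      rw [inner_self_eq_norm_sq_to_K]
      simp
    rw [← hn, this, ← inner_conj_symm, RCLike.norm_conj]
    exact h2
  have hx1 : ‖x‖ ≤ 1 := by nlinarith [norm_nonneg x]
  have hy1 : ‖y‖ ≤ 1 := by nlinarith [norm_nonneg y]
  have hcs : (1 : ℝ) ≤ ‖x‖ * ‖y‖ := by
    have := norm_inner_le_norm (𝕜 := ℂ) x y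
    rw [hxy] at this
    simpa using this
  have hxn : ‖x‖ = 1 := le_antisymm hx1 (by nlinarith [norm_nonneg x, norm_nonneg y])
  have hyn : ‖y‖ = 1 := le_antisymm hy1 (by nlinarith [norm_nonneg x, norm_nonneg y])
  have heq : x = y := by
    have h := (inner_eq_norm_mul_iff (𝕜 := ℂ) (x := x) (y := y)).mp
      (by rw [hxy, hxn, hyn]; norm_num)
    rw [hxn, hyn] at h
    simpa using h
  -- conclude
  have : (adjoint A * A) v = adjoint A y := by
    rw [ContinuousLinearMap.mul_apply, ← hxdef, heq]
  rw [this, hydef, ← ContinuousLinearMap.comp_apply, ← ContinuousLinearMap.mul_def,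
    ← star_eq_adjoint, ← star_eq_adjoint, ← star_mul, hBA, star_one,
    ContinuousLinearMap.one_apply]

theorem stmt12 [Nonempty Ω] (κ : Ω → H) (hκ : ∀ l, ‖κ l‖ = 1)
    (hspan : (Submodule.span ℂ (Set.range κ)).topologicalClosure = ⊤)
    (A B : H →L[ℂ] H) (hA : IsUnit A) (hB : IsUnit B)
    (T : WithLp 2 (H × H) →L[ℂ] WithLp 2 (H × H))
    (hT : ∀ x y : H,
      T ((WithLp.equiv 2 (H × H)).symm (x, y)) = (WithLp.equiv 2 (H × H)).symm (A x, B y)) :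
    (adjoint T * T = 1 ∧ T * adjoint T = 1)
      ↔ (max (berN κ (adjoint A * A)) (berN κ (adjoint B * B)) ≤ 1
          ∧ max (berN κ (Ring.inverse (adjoint A * A)))
              (berN κ (Ring.inverse (adjoint B * B))) ≤ 1) := by
  have hdense : Dense ((Submodule.span ℂ (Set.range κ) : Submodule ℂ H) : Set H) := by
    rwa [Submodule.dense_iff_topologicalClosure_eq_top]
  constructor
  · rintro ⟨hTT, -⟩
    have hinner : ∀ x y x' y' : H,
        (inner ℂ (A x) (A x') : ℂ) + inner ℂ (B y) (B y') = inner ℂ x x' + inner ℂ y y' := by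
      intro x y x' y'
      have h := congrArg (fun S : WithLp 2 (H × H) →L[ℂ] WithLp 2 (H × H) =>
        (inner ℂ (S ((WithLp.equiv 2 (H × H)).symm (x, y)))
          ((WithLp.equiv 2 (H × H)).symm (x', y')) : ℂ)) hTT
      simp only [ContinuousLinearMap.mul_apply, adjoint_inner_left, hT,
        ContinuousLinearMap.one_apply] at h
      simp only [WithLp.prod_inner_apply,
        WithLp.equiv_symm_apply, WithLp.ofLp_toLp] at h
      exact h
    have hAA : adjoint A * A = 1 := by
      refine ContinuousLinearMap.ext fun x => ext_inner_right ℂ fun x' => ?_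
      have := hinner x 0 x' 0
      simp only [map_zero, inner_zero_left, add_zero] at this
      rw [ContinuousLinearMap.mul_apply, adjoint_inner_left, this,
        ContinuousLinearMap.one_apply]
    have hBB : adjoint B * B = 1 := by
      refine ContinuousLinearMap.ext fun y => ext_inner_right ℂ fun y' => ?_
      have := hinner 0 y 0 y'
      simp only [map_zero, inner_zero_left, zero_add] at this
      rw [ContinuousLinearMap.mul_apply, adjoint_inner_left, this,
        ContinuousLinearMap.one_apply]
    rw [hAA, hBB, Ring.inverse_one]
    exact ⟨max_le (berN_one_le κ hκ) (berN_one_le κ hκ),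
      max_le (berN_one_le κ hκ) (berN_one_le κ hκ)⟩
  · rintro ⟨h1, h2⟩
    have hAA : adjoint A * A = 1 := by
      refine ContinuousLinearMap.ext_on hdense ?_
      rintro _ ⟨l, rfl⟩
      rw [ContinuousLinearMap.one_apply]
      exact key_vec A hA (κ l) (hκ l)
        (le_berN κ hκ _ ((max_le_iff.mp h1).1) l)
        (le_berN κ hκ _ ((max_le_iff.mp h2).1) l)
    have hBB : adjoint B * B = 1 := by
      refine ContinuousLinearMap.ext_on hdense ?_
      rintro _ ⟨l, rfl⟩
      rw [ContinuousLinearMap.one_apply]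
      exact key_vec B hB (κ l) (hκ l)
        (le_berN κ hκ _ ((max_le_iff.mp h1).2) l)
        (le_berN κ hκ _ ((max_le_iff.mp h2).2) l)
    have hAA' : A * adjoint A = 1 := by
      have hadj : adjoint A = Ring.inverse A := by
        have hAB : A * Ring.inverse A = 1 := Ring.mul_inverse_cancel A hA
        calc adjoint A = (adjoint A * A) * Ring.inverse A := by
              rw [mul_assoc, hAB, mul_one]
          _ = Ring.inverse A := by rw [hAA, one_mul]
      rw [hadj]; exact Ring.mul_inverse_cancel A hA
    have hBB' : B * adjoint B = 1 := by
      have hadj : adjoint B = Ring.inverse B := by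
        have hAB : B * Ring.inverse B = 1 := Ring.mul_inverse_cancel B hB
        calc adjoint B = (adjoint B * B) * Ring.inverse B := by
              rw [mul_assoc, hAB, mul_one]
          _ = Ring.inverse B := by rw [hBB, one_mul]
      rw [hadj]; exact Ring.mul_inverse_cancel B hB
    have hTadj : ∀ u : WithLp 2 (H × H),
        adjoint T u = (WithLp.equiv 2 (H × H)).symm (adjoint A u.fst, adjoint B u.snd) := by
      intro u
      refine ext_inner_right ℂ fun w => ?_
      have hw : w = (WithLp.equiv 2 (H × H)).symm (w.fst, w.snd) := rfl
      rw [adjoint_inner_left, hw, hT]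
      simp only [WithLp.prod_inner_apply, WithLp.equiv_symm_apply, WithLp.ofLp_toLp,
        WithLp.fst, WithLp.snd, adjoint_inner_left]
    constructor
    · refine ContinuousLinearMap.ext fun u => ?_
      have hu : u = (WithLp.equiv 2 (H × H)).symm (u.fst, u.snd) := rfl
      rw [ContinuousLinearMap.mul_apply, hu, hT, hTadj]
      simp only [WithLp.equiv_symm_apply, WithLp.toLp_fst, WithLp.toLp_snd]
      rw [← ContinuousLinearMap.mul_apply (adjoint A) A, ← ContinuousLinearMap.mul_apply
        (adjoint B) B, hAA, hBB]
      rfl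
    · refine ContinuousLinearMap.ext fun u => ?_
      have hu : u = (WithLp.equiv 2 (H × H)).symm (u.fst, u.snd) := rfl
      rw [ContinuousLinearMap.mul_apply, hu, hTadj]
      simp only [WithLp.equiv_symm_apply, WithLp.toLp_fst, WithLp.toLp_snd]
      rw [← WithLp.equiv_symm_apply, hT, ← ContinuousLinearMap.mul_apply A (adjoint A), ← ContinuousLinearMap.mul_apply
        B (adjoint B), hAA', hBB']
      rfl
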